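/- arXiv:2209.00396 — 2 statements merged into one kernel-verified Lean document; each statement's English description precedes it below -/
import Mathlib

section
/- Let s∈(0,1). For each N≥1 let ℍ_s∈M_N(ℝ) be the matrix with entries (ℍ_s)_{i,j} = 1/(1+d(i,j))^s, where d(i,j)=min(|i−j|, N−|i−j|). Then ℍ_s is invertible and there exists a constant C>0 depending only on s (not on N) such that |∑_{i=1}^{N}(ℍ_s^{−1})_{i,1}| ≤ C/N^{1−s}. -/
open MeasureTheory Real Filter Topology Matrix

noncomputable section

open Finset Complex
open scoped ENNReal

/-- The cyclic distance `d(i,j) = min(|i-j|, N-|i-j|)` on `{0, …, N-1}`. -/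
def dNat (N i j : ℕ) : ℕ := min ((i : ℤ) - (j : ℤ)).natAbs (N - ((i : ℤ) - (j : ℤ)).natAbs)

/-- The Riesz matrix `ℍ_s = (1/(1+d(i,j))^s)`. -/
def rieszMatrix (s : ℝ) (N : ℕ) : Matrix (Fin N) (Fin N) ℝ :=
  Matrix.of fun i j => 1 / (1 + (dNat N (i : ℕ) (j : ℕ) : ℝ)) ^ s

lemma S_pos {N : ℕ} (hN : 1 ≤ N) {r : ℝ} (hr0 : 0 < r) (hr1 : r < 1)
    {z : ℂ} (hz : z ^ N = 1) :
    ∃ ρ : ℝ, 0 < ρ ∧ ∑ k ∈ Finset.range N, (r : ℂ) ^ (min k (N - k)) * z ^ k = (ρ : ℂ) := by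
  have hNz : N ≠ 0 := by omega
  have hzabs : ‖z‖ = 1 := by
    exact Complex.norm_eq_one_of_pow_eq_one hz hNz
  have hzz : z * (starRingEnd ℂ) z = 1 := by
    rw [Complex.mul_conj]; norm_cast
    rw [Complex.normSq_eq_norm_sq, hzabs]; norm_num
  set M : ℕ := N / 2 with hM
  set w : ℂ := (r : ℂ) * z with hw
  have hcw : (starRingEnd ℂ) w = (r : ℂ) * (starRingEnd ℂ) z := by
    rw [hw, _root_.map_mul, Complex.conj_ofReal]
  -- split the sum
  have hsplit : ∑ k ∈ Finset.range N, (r : ℂ) ^ (min k (N - k)) * z ^ k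
      = (∑ k ∈ Finset.range (M + 1), w ^ k)
        + (starRingEnd ℂ) (∑ j ∈ Finset.Ico 1 (N - M), w ^ j) := by
    rw [Finset.range_eq_Ico, ← Finset.sum_Ico_consecutive _ (by omega : 0 ≤ M + 1) (by omega : M + 1 ≤ N)]
    congr 1
    · rw [← Finset.range_eq_Ico]
      refine Finset.sum_congr rfl fun k hk => ?_
      rw [Finset.mem_range] at hk
      rw [show min k (N - k) = k by omega, _root_.mul_pow]
    · rw [_root_.map_sum]
      refine Finset.sum_nbij' (fun k => N - k) (fun j => N - j) ?_ ?_ ?_ ?_ ?_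
      · intro k hk; simp only [Finset.mem_Ico] at *; omega
      · intro j hj; simp only [Finset.mem_Ico] at *; omega
      · intro k hk; simp only [Finset.mem_Ico] at hk ⊢; omega
      · intro j hj; simp only [Finset.mem_Ico] at hj ⊢; omega
      · intro k hk
        simp only [Finset.mem_Ico] at hk
        rw [show min k (N - k) = N - k by omega]
        rw [_root_.map_pow, hcw, _root_.mul_pow, ← _root_.map_pow]
        have h1 : z ^ (N - k) * z ^ k = 1 := by rw [← pow_add, Nat.sub_add_cancel (by omega)]; exact hz
        have hzk : z ^ k ≠ 0 := by
          intro h; rw [h, mul_zero] at h1; exact one_ne_zero h1.symm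
        have h2 : (starRingEnd ℂ) (z ^ k) * z ^ k = 1 := by
          rw [Complex.conj_mul']
          norm_cast
          simp [Complex.normSq_eq_norm_sq, _root_.map_pow, hzabs]
        have h3 : z ^ (N - k) = (starRingEnd ℂ) (z ^ k) := mul_right_cancel₀ hzk (h1.trans h2.symm)
        rw [h3, Complex.conj_conj]
  set A : ℂ := ∑ k ∈ Finset.range (M + 1), w ^ k with hA
  set B : ℂ := ∑ j ∈ Finset.Ico 1 (N - M), w ^ j with hB
  have hgA : (1 - w) * A = 1 - w ^ (M + 1) := by
    have := geom_sum_mul w (M + 1)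
    linear_combination -this
  have hgB : (1 - w) * B = w - w ^ (N - M) := by
    have hB' : B = (∑ j ∈ Finset.range (N - M), w ^ j) - 1 := by
      rw [hB, Finset.range_eq_Ico, ← Finset.sum_Ico_consecutive _ (by omega : 0 ≤ 1) (by omega : 1 ≤ N - M)]
      have : ∑ j ∈ Finset.Ico 0 1, w ^ j = 1 := by simp
      rw [this]; ring
    have := geom_sum_mul w (N - M)
    rw [hB']; linear_combination -this
  have hgB2 : (1 - (starRingEnd ℂ) w) * (starRingEnd ℂ) B
      = (starRingEnd ℂ) w - ((starRingEnd ℂ) w) ^ (N - M) := by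
    have := congrArg (starRingEnd ℂ) hgB
    simpa [_root_.map_mul, _root_.map_sub, _root_.map_pow, _root_.map_one] using this
  have hww : w * (starRingEnd ℂ) w = (r : ℂ) ^ 2 := by
    rw [hcw, hw]; linear_combination (r:ℂ)^2 * hzz
  -- the master product identity
  have hkey : (A + (starRingEnd ℂ) B) * ((1 - w) * (starRingEnd ℂ) (1 - w))
      = 1 - (r : ℂ) ^ 2 - w ^ (M + 1) * (1 - (starRingEnd ℂ) w)
        - ((starRingEnd ℂ) w) ^ (N - M) * (1 - w) := by
    rw [_root_.map_sub, _root_.map_one]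
    linear_combination (1 - (starRingEnd ℂ) w) * hgA + (1 - w) * hgB2 - hww
  -- reduce to producing a positive real value for the product
  have hwabs : ‖w‖ = r := by
    rw [hw, norm_mul, Complex.norm_of_nonneg hr0.le, hzabs, mul_one]
  have hwne : (1 : ℂ) - w ≠ 0 := by
    intro h
    have : w = 1 := by linear_combination -h
    rw [this] at hwabs
    simp at hwabs
    linarith
  have hns : 0 < Complex.normSq (1 - w) := Complex.normSq_pos.mpr hwne
  have hmc : (1 - w) * (starRingEnd ℂ) (1 - w) = (Complex.normSq (1 - w) : ℂ) :=
    Complex.mul_conj _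
  suffices h : ∃ ρ₂ : ℝ, 0 < ρ₂ ∧
      (A + (starRingEnd ℂ) B) * ((1 - w) * (starRingEnd ℂ) (1 - w)) = (ρ₂ : ℂ) by
    obtain ⟨ρ₂, hρ₂, hid⟩ := h
    refine ⟨ρ₂ / Complex.normSq (1 - w), div_pos hρ₂ hns, ?_⟩
    rw [hsplit]
    rw [hmc] at hid
    rw [Complex.ofReal_div]
    rw [eq_div_iff (by exact_mod_cast ne_of_gt hns)]
    exact hid
  rcases Nat.even_or_odd N with ⟨L, hL⟩ | ⟨L, hL⟩
  · -- even case : N = L + L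
    have hL1 : 1 ≤ L := by omega
    have h1 : M + 1 = L + 1 := by omega
    have h2 : N - M = L := by omega
    have hε2 : z ^ L * z ^ L = 1 := by rw [← pow_add, ← hL]; exact hz
    have hfac : (z ^ L - 1) * (z ^ L + 1) = 0 := by linear_combination hε2
    have hrL : r ^ L < 1 := pow_lt_one₀ hr0.le hr1 (by omega)
    have hrL0 : 0 < r ^ L := pow_pos hr0 L
    rcases mul_eq_zero.mp hfac with h | h
    · have hzL : z ^ L = 1 := by linear_combination h
      refine ⟨(1 - r ^ 2) * (1 - r ^ L), mul_pos (by nlinarith) (by linarith), ?_⟩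
      have e1' : z ^ (L + 1) = z := by rw [pow_succ, hzL, one_mul]
      have e1 : w ^ (M + 1) = (r : ℂ) ^ (L + 1) * z := by
        rw [h1, hw, _root_.mul_pow, e1']
      have e2 : ((starRingEnd ℂ) w) ^ (N - M) = (r : ℂ) ^ L := by
        rw [h2, hcw, _root_.mul_pow, ← _root_.map_pow, hzL, _root_.map_one, mul_one]
      rw [hkey, e1, e2, hcw, hw]
      push_cast
      linear_combination (r : ℂ) ^ (L + 2) * hzz
    · have hzL : z ^ L = -1 := by linear_combination h
      refine ⟨(1 - r ^ 2) * (1 + r ^ L), mul_pos (by nlinarith) (by linarith), ?_⟩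
      have e1' : z ^ (L + 1) = -z := by rw [pow_succ, hzL, neg_one_mul]
      have e1 : w ^ (M + 1) = -((r : ℂ) ^ (L + 1) * z) := by
        rw [h1, hw, _root_.mul_pow, e1']; ring
      have e2 : ((starRingEnd ℂ) w) ^ (N - M) = -((r : ℂ) ^ L) := by
        rw [h2, hcw, _root_.mul_pow, ← _root_.map_pow, hzL]; simp
      rw [hkey, e1, e2, hcw, hw]
      push_cast
      linear_combination -(r : ℂ) ^ (L + 2) * hzz
  · -- odd case : N = 2 * L + 1
    have h1 : M + 1 = L + 1 := by omega
    have h2 : N - M = L + 1 := by omega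
    set y : ℂ := z ^ L with hy
    have habs_y : ‖y‖ = 1 := by rw [hy, norm_pow, hzabs, one_pow]
    have hyne : y ≠ 0 := by
      intro h; rw [h] at habs_y; simp at habs_y
    have hyy : y * (starRingEnd ℂ) y = 1 := by
      rw [Complex.mul_conj]; norm_cast
      rw [Complex.normSq_eq_norm_sq, habs_y]; norm_num
    have hyzrel : y * z = (starRingEnd ℂ) y := by
      have hh : (y * z) * y = 1 := by
        rw [hy]
        have he : z ^ L * z * z ^ L = z ^ (L + 1 + L) := by ring
        rw [he, show L + 1 + L = N by omega]
        exact hz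
      have hh2 : ((starRingEnd ℂ) y) * y = 1 := by linear_combination hyy
      exact mul_right_cancel₀ hyne (hh.trans hh2.symm)
    have hyzrel2 : (starRingEnd ℂ) y * (starRingEnd ℂ) z = y := by
      rw [← _root_.map_mul, hyzrel, Complex.conj_conj]
    have hyz : z ^ (L + 1) = (starRingEnd ℂ) y := by
      rw [pow_succ, ← hy]
      rw [← hyzrel]
    have hadd : y + (starRingEnd ℂ) y = 2 * ((y.re : ℝ) : ℂ) := by
      rw [Complex.add_conj]; push_cast; ring
    have hre : |y.re| ≤ 1 := by
      have := Complex.abs_re_le_norm y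
      rwa [habs_y] at this
    have hrp : r ^ (L + 1) ≤ r := by
      calc r ^ (L + 1) ≤ r ^ 1 := pow_le_pow_of_le_one hr0.le hr1.le (by omega)
      _ = r := pow_one r
    have hrp0 : 0 < r ^ (L + 1) := pow_pos hr0 _
    refine ⟨(1 - r) * (1 + r - 2 * r ^ (L + 1) * y.re), ?_, ?_⟩
    · obtain ⟨hl, hu⟩ := abs_le.mp hre
      have hb : r ^ (L + 1) * y.re ≤ r := by nlinarith
      exact mul_pos (by linarith) (by linarith)
    · have e1 : w ^ (M + 1) = (r : ℂ) ^ (L + 1) * (starRingEnd ℂ) y := by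
        rw [h1, hw, _root_.mul_pow, hyz]
      have e2 : ((starRingEnd ℂ) w) ^ (N - M) = (r : ℂ) ^ (L + 1) * y := by
        rw [h2, hcw, _root_.mul_pow, ← _root_.map_pow, hyz, Complex.conj_conj]
      rw [hkey, e1, e2, hcw, hw]
      push_cast
      linear_combination (r : ℂ) ^ (L + 2) * hyzrel2 + (r : ℂ) ^ (L + 2) * hyzrel
        - (1 - (r : ℂ)) * ((r : ℂ) ^ (L + 1)) * hadd

lemma dvd_char {N : ℕ} (hN : 0 < N) (t : ℤ) (h1 : -(N:ℤ) < t) (h2 : t < 2*N) :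
    ((N : ℤ) ∣ t) ↔ (t = 0 ∨ t = N) := by
  have hN' : (0:ℤ) < N := by exact_mod_cast hN
  constructor
  · rintro ⟨c, rfl⟩
    have hc0 : 0 ≤ c := by
      by_contra h
      push_neg at h
      have : (N:ℤ) * c ≤ N * (-1) := mul_le_mul_of_nonneg_left (by omega) hN'.le
      linarith
    have hc1 : c ≤ 1 := by
      by_contra h
      push_neg at h
      have : (N:ℤ) * 2 ≤ N * c := mul_le_mul_of_nonneg_left (by omega) hN'.le
      linarith
    interval_cases c
    · left; ring
    · right; ring
  · rintro (rfl | rfl)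
    · exact dvd_zero _
    · exact dvd_refl _

lemma orth_sum {N : ℕ} (hN : 1 ≤ N) (t : ℤ) :
    ∑ m ∈ Finset.range N, (Complex.exp (2 * Real.pi * Complex.I / N) ^ t) ^ m
      = if (N : ℤ) ∣ t then (N : ℂ) else 0 := by
  have hprim : IsPrimitiveRoot (Complex.exp (2 * Real.pi * Complex.I / N)) N :=
    Complex.isPrimitiveRoot_exp N (by omega)
  set ζ := Complex.exp (2 * Real.pi * Complex.I / N) with hζ
  by_cases hd : (N : ℤ) ∣ t
  · rw [if_pos hd]
    have h1 : ζ ^ t = 1 := (hprim.zpow_eq_one_iff_dvd t).mpr hd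
    simp [h1]
  · rw [if_neg hd]
    have h1 : ζ ^ t ≠ 1 := fun h => hd ((hprim.zpow_eq_one_iff_dvd t).mp h)
    rw [geom_sum_eq h1]
    have h2 : (ζ ^ t) ^ N = 1 := by
      rw [← _root_.zpow_natCast (ζ ^ t), ← _root_.zpow_mul, mul_comm, _root_.zpow_mul, _root_.zpow_natCast,
        hprim.pow_eq_one, _root_.one_zpow]
    rw [h2, sub_self, zero_div]

lemma quad_pos {N : ℕ} (hN : 1 ≤ N) {r : ℝ} (hr0 : 0 < r) (hr1 : r < 1)
    {x : Fin N → ℝ} (hx : x ≠ 0) :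
    0 < ∑ i : Fin N, ∑ j : Fin N,
      x i * x j * r ^ (min ((i:ℤ) - (j:ℤ)).natAbs (N - ((i:ℤ) - (j:ℤ)).natAbs)) := by
  have hN0 : 0 < N := hN
  set ζ : ℂ := Complex.exp (2 * Real.pi * Complex.I / N) with hζ
  have hprim : IsPrimitiveRoot ζ N := Complex.isPrimitiveRoot_exp N (by omega)
  have hζ0 : ζ ≠ 0 := Complex.exp_ne_zero _
  have hζN : ζ ^ N = 1 := hprim.pow_eq_one
  have hζabs : ‖ζ‖ = 1 := by
    exact Complex.norm_eq_one_of_pow_eq_one hζN (by omega)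
  have hconjζ : (starRingEnd ℂ) ζ = ζ⁻¹ := by
    rw [Complex.inv_def, Complex.normSq_eq_norm_sq, hζabs]
    norm_num
  -- the DFT vector
  set F : ℕ → ℂ := fun m => ∑ i : Fin N, (x i : ℂ) * (ζ ^ m) ^ (i : ℕ) with hF
  -- power bookkeeping
  have key : ∀ (m k : ℕ) (i j : Fin N),
      (ζ ^ m) ^ k * ((ζ ^ m) ^ (i : ℕ) * (starRingEnd ℂ) ((ζ ^ m) ^ (j : ℕ)))
        = (ζ ^ ((k : ℤ) + (i : ℕ) - (j : ℕ))) ^ m := by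
    intro m k i j
    have hB : (starRingEnd ℂ) ((ζ ^ m) ^ (j : ℕ)) = ζ ^ (-(((m * j : ℕ) : ℤ))) := by
      rw [← pow_mul, _root_.map_pow, hconjζ, _root_.inv_pow, ← _root_.zpow_natCast, ← _root_.zpow_neg]
    rw [← pow_mul, ← pow_mul, hB, ← _root_.zpow_natCast ζ (m * k), ← _root_.zpow_natCast ζ (m * (i:ℕ)),
      ← _root_.zpow_add₀ hζ0, ← _root_.zpow_add₀ hζ0, ← _root_.zpow_natCast (ζ ^ ((k : ℤ) + (i:ℕ) - (j:ℕ))),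
      ← _root_.zpow_mul]
    congr 1
    push_cast
    ring
  -- expansion of the quadratic form summand
  have expand : ∀ m : ℕ,
      (∑ k ∈ Finset.range N, (r : ℂ) ^ (min k (N - k)) * (ζ ^ m) ^ k) * (F m * (starRingEnd ℂ) (F m))
        = ∑ i : Fin N, ∑ j : Fin N, ∑ k ∈ Finset.range N,
            ((r : ℂ) ^ (min k (N - k)) * (x i : ℂ) * (x j : ℂ)) * (ζ ^ ((k : ℤ) + (i:ℕ) - (j:ℕ))) ^ m := by
    intro m
    rw [hF, _root_.map_sum, Finset.sum_mul_sum]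
    rw [Finset.mul_sum]
    refine Finset.sum_congr rfl fun i _ => ?_
    rw [Finset.mul_sum]
    refine Finset.sum_congr rfl fun j _ => ?_
    rw [Finset.sum_mul]
    refine Finset.sum_congr rfl fun k _ => ?_
    rw [_root_.map_mul, Complex.conj_ofReal]
    linear_combination ((r : ℂ) ^ (min k (N - k)) * (x i : ℂ) * (x j : ℂ)) * key m k i j
  -- the per-pair contracted sum
  have inner : ∀ i j : Fin N,
      ∑ k ∈ Finset.range N, ((r : ℂ) ^ (min k (N - k)) * (x i : ℂ) * (x j : ℂ))
          * (if (N : ℤ) ∣ ((k : ℤ) + (i:ℕ) - (j:ℕ)) then (N : ℂ) else 0)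
        = (N : ℂ) * ((x i * x j * r ^ (min ((i:ℤ) - (j:ℤ)).natAbs (N - ((i:ℤ) - (j:ℤ)).natAbs)) : ℝ) : ℂ) := by
    intro i j
    have hi : (i : ℕ) < N := i.isLt
    have hj : (j : ℕ) < N := j.isLt
    set k₀ : ℕ := ((j : ℕ) + N - (i : ℕ)) % N with hk₀def
    have hlt : k₀ < N := Nat.mod_lt _ hN0
    have hk₀lin : k₀ + (i:ℕ) = (j:ℕ) ∨ k₀ + (i:ℕ) = (j:ℕ) + N := by
      rcases le_or_gt N ((j : ℕ) + N - (i : ℕ)) with h | h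
      · have h2 : ((j : ℕ) + N - (i : ℕ)) % N = (j : ℕ) + N - (i : ℕ) - N := by
          rw [Nat.mod_eq_sub_mod h, Nat.mod_eq_of_lt (by omega)]
        omega
      · have h2 : ((j : ℕ) + N - (i : ℕ)) % N = (j : ℕ) + N - (i : ℕ) := Nat.mod_eq_of_lt h
        omega
    have hchar : (k₀ : ℤ) + (i:ℕ) - (j:ℕ) = 0 ∨ (k₀ : ℤ) + (i:ℕ) - (j:ℕ) = N := by
      omega
    have hdvd : (N : ℤ) ∣ ((k₀ : ℤ) + (i:ℕ) - (j:ℕ)) := by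
      rcases hchar with h | h
      · rw [h]; exact dvd_zero _
      · rw [h]
    rw [Finset.sum_eq_single_of_mem k₀ (Finset.mem_range.mpr hlt) ?_]
    · rw [if_pos hdvd]
      have hmin : min k₀ (N - k₀) = min ((i:ℤ) - (j:ℤ)).natAbs (N - ((i:ℤ) - (j:ℤ)).natAbs) := by
        omega
      rw [hmin]
      push_cast
      ring
    · intro k hk hne
      rw [Finset.mem_range] at hk
      rw [if_neg, mul_zero]
      intro hdd
      have hb := (dvd_char hN0 _ (by omega) (by omega)).mp hdd
      omega
  -- put the quadratic form expansion together
  have eq1 : ∑ m ∈ Finset.range N,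
      (∑ k ∈ Finset.range N, (r : ℂ) ^ (min k (N - k)) * (ζ ^ m) ^ k) * (F m * (starRingEnd ℂ) (F m))
      = (N : ℂ) * ((∑ i : Fin N, ∑ j : Fin N,
          x i * x j * r ^ (min ((i:ℤ) - (j:ℤ)).natAbs (N - ((i:ℤ) - (j:ℤ)).natAbs)) : ℝ) : ℂ) := by
    calc ∑ m ∈ Finset.range N,
        (∑ k ∈ Finset.range N, (r : ℂ) ^ (min k (N - k)) * (ζ ^ m) ^ k) * (F m * (starRingEnd ℂ) (F m))
        = ∑ m ∈ Finset.range N, ∑ i : Fin N, ∑ j : Fin N, ∑ k ∈ Finset.range N,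
            ((r : ℂ) ^ (min k (N - k)) * (x i : ℂ) * (x j : ℂ)) * (ζ ^ ((k : ℤ) + (i:ℕ) - (j:ℕ))) ^ m :=
          Finset.sum_congr rfl fun m _ => expand m
      _ = ∑ i : Fin N, ∑ m ∈ Finset.range N, ∑ j : Fin N, ∑ k ∈ Finset.range N,
            ((r : ℂ) ^ (min k (N - k)) * (x i : ℂ) * (x j : ℂ)) * (ζ ^ ((k : ℤ) + (i:ℕ) - (j:ℕ))) ^ m :=
          Finset.sum_comm
      _ = ∑ i : Fin N, ∑ j : Fin N, ∑ m ∈ Finset.range N, ∑ k ∈ Finset.range N,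
            ((r : ℂ) ^ (min k (N - k)) * (x i : ℂ) * (x j : ℂ)) * (ζ ^ ((k : ℤ) + (i:ℕ) - (j:ℕ))) ^ m :=
          Finset.sum_congr rfl fun i _ => Finset.sum_comm
      _ = ∑ i : Fin N, ∑ j : Fin N, ∑ k ∈ Finset.range N, ∑ m ∈ Finset.range N,
            ((r : ℂ) ^ (min k (N - k)) * (x i : ℂ) * (x j : ℂ)) * (ζ ^ ((k : ℤ) + (i:ℕ) - (j:ℕ))) ^ m :=
          Finset.sum_congr rfl fun i _ => Finset.sum_congr rfl fun j _ => Finset.sum_comm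
      _ = ∑ i : Fin N, ∑ j : Fin N, ∑ k ∈ Finset.range N,
            ((r : ℂ) ^ (min k (N - k)) * (x i : ℂ) * (x j : ℂ))
              * (if (N : ℤ) ∣ ((k : ℤ) + (i:ℕ) - (j:ℕ)) then (N : ℂ) else 0) := by
          refine Finset.sum_congr rfl fun i _ => Finset.sum_congr rfl fun j _ =>
            Finset.sum_congr rfl fun k _ => ?_
          rw [← Finset.mul_sum, orth_sum hN]
      _ = ∑ i : Fin N, ∑ j : Fin N, (N : ℂ) * ((x i * x j
            * r ^ (min ((i:ℤ) - (j:ℤ)).natAbs (N - ((i:ℤ) - (j:ℤ)).natAbs)) : ℝ) : ℂ) :=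
          Finset.sum_congr rfl fun i _ => Finset.sum_congr rfl fun j _ => inner i j
      _ = (N : ℂ) * ((∑ i : Fin N, ∑ j : Fin N, x i * x j
            * r ^ (min ((i:ℤ) - (j:ℤ)).natAbs (N - ((i:ℤ) - (j:ℤ)).natAbs)) : ℝ) : ℂ) := by
          push_cast
          rw [Finset.mul_sum]
          refine Finset.sum_congr rfl fun i _ => ?_
          rw [Finset.mul_sum]
  -- Parseval
  have parseval : ∑ m ∈ Finset.range N, F m * (starRingEnd ℂ) (F m)
      = (N : ℂ) * ((∑ i : Fin N, x i ^ 2 : ℝ) : ℂ) := by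
    have expandP : ∀ m : ℕ, F m * (starRingEnd ℂ) (F m)
        = ∑ i : Fin N, ∑ j : Fin N, ((x i : ℂ) * (x j : ℂ)) * (ζ ^ (((0:ℕ) : ℤ) + (i:ℕ) - (j:ℕ))) ^ m := by
      intro m
      rw [hF, _root_.map_sum, Finset.sum_mul_sum]
      refine Finset.sum_congr rfl fun i _ => Finset.sum_congr rfl fun j _ => ?_
      rw [_root_.map_mul, Complex.conj_ofReal]
      have hk := key m 0 i j
      rw [pow_zero, one_mul] at hk
      linear_combination ((x i : ℂ) * (x j : ℂ)) * hk
    have innerP : ∀ i : Fin N, ∑ j : Fin N, ((x i : ℂ) * (x j : ℂ))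
          * (if (N : ℤ) ∣ (((0:ℕ) : ℤ) + (i:ℕ) - (j:ℕ)) then (N : ℂ) else 0)
        = (N : ℂ) * ((x i ^ 2 : ℝ) : ℂ) := by
      intro i
      have hi : (i : ℕ) < N := i.isLt
      rw [Finset.sum_eq_single_of_mem i (Finset.mem_univ i) ?_]
      · rw [if_pos (by simp)]
        push_cast
        ring
      · intro j _ hne
        have hj : (j : ℕ) < N := j.isLt
        rw [if_neg, mul_zero]
        intro hdd
        have hb := (dvd_char hN0 _ (by omega) (by omega)).mp hdd
        have : (i : ℕ) = (j : ℕ) := by omega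
        exact hne (Fin.ext this).symm
    calc ∑ m ∈ Finset.range N, F m * (starRingEnd ℂ) (F m)
        = ∑ m ∈ Finset.range N, ∑ i : Fin N, ∑ j : Fin N,
            ((x i : ℂ) * (x j : ℂ)) * (ζ ^ (((0:ℕ) : ℤ) + (i:ℕ) - (j:ℕ))) ^ m :=
          Finset.sum_congr rfl fun m _ => expandP m
      _ = ∑ i : Fin N, ∑ m ∈ Finset.range N, ∑ j : Fin N,
            ((x i : ℂ) * (x j : ℂ)) * (ζ ^ (((0:ℕ) : ℤ) + (i:ℕ) - (j:ℕ))) ^ m := Finset.sum_comm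
      _ = ∑ i : Fin N, ∑ j : Fin N, ∑ m ∈ Finset.range N,
            ((x i : ℂ) * (x j : ℂ)) * (ζ ^ (((0:ℕ) : ℤ) + (i:ℕ) - (j:ℕ))) ^ m :=
          Finset.sum_congr rfl fun i _ => Finset.sum_comm
      _ = ∑ i : Fin N, ∑ j : Fin N, ((x i : ℂ) * (x j : ℂ))
            * (if (N : ℤ) ∣ (((0:ℕ) : ℤ) + (i:ℕ) - (j:ℕ)) then (N : ℂ) else 0) := by
          refine Finset.sum_congr rfl fun i _ => Finset.sum_congr rfl fun j _ => ?_
          rw [← Finset.mul_sum, orth_sum hN]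
      _ = ∑ i : Fin N, (N : ℂ) * ((x i ^ 2 : ℝ) : ℂ) :=
          Finset.sum_congr rfl fun i _ => innerP i
      _ = (N : ℂ) * ((∑ i : Fin N, x i ^ 2 : ℝ) : ℂ) := by
          push_cast
          rw [Finset.mul_sum]
  -- positivity via S_pos
  have hSm : ∀ m : ℕ, ∃ ρ : ℝ, 0 < ρ ∧
      ∑ k ∈ Finset.range N, (r : ℂ) ^ (min k (N - k)) * (ζ ^ m) ^ k = (ρ : ℂ) := by
    intro m
    refine S_pos hN hr0 hr1 ?_
    rw [← pow_mul, mul_comm, pow_mul, hζN, one_pow]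
  choose ρ hρpos hρeq using hSm
  have hFmc : ∀ m : ℕ, F m * (starRingEnd ℂ) (F m) = ((Complex.normSq (F m) : ℝ) : ℂ) :=
    fun m => Complex.mul_conj _
  have e3 : ∑ m ∈ Finset.range N,
      (∑ k ∈ Finset.range N, (r : ℂ) ^ (min k (N - k)) * (ζ ^ m) ^ k) * (F m * (starRingEnd ℂ) (F m))
      = ((∑ m ∈ Finset.range N, ρ m * Complex.normSq (F m) : ℝ) : ℂ) := by
    push_cast
    exact Finset.sum_congr rfl fun m _ => by rw [hρeq m, hFmc m]
  have hmain : (N : ℝ) * (∑ i : Fin N, ∑ j : Fin N,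
      x i * x j * r ^ (min ((i:ℤ) - (j:ℤ)).natAbs (N - ((i:ℤ) - (j:ℤ)).natAbs)))
      = ∑ m ∈ Finset.range N, ρ m * Complex.normSq (F m) := by
    have := eq1.symm.trans e3
    exact_mod_cast this
  have hParR : ∑ m ∈ Finset.range N, Complex.normSq (F m) = (N : ℝ) * ∑ i : Fin N, x i ^ 2 := by
    have h := parseval
    rw [Finset.sum_congr rfl fun m _ => hFmc m] at h
    exact_mod_cast h
  have hx2 : 0 < ∑ i : Fin N, x i ^ 2 := by
    obtain ⟨i, hi⟩ := Function.ne_iff.mp hx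
    exact Finset.sum_pos' (fun i _ => sq_nonneg _) ⟨i, Finset.mem_univ i, pow_two_pos_of_ne_zero hi⟩
  have hNR : (0 : ℝ) < N := by exact_mod_cast hN0
  have hex : ∃ m₀ ∈ Finset.range N, 0 < Complex.normSq (F m₀) := by
    by_contra h
    push_neg at h
    have hz : ∑ m ∈ Finset.range N, Complex.normSq (F m) = 0 := by
      apply le_antisymm
      · exact Finset.sum_nonpos h
      · exact Finset.sum_nonneg fun m _ => Complex.normSq_nonneg _
    rw [hParR] at hz
    nlinarith
  obtain ⟨m₀, hm₀mem, hm₀⟩ := hex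
  have hsum_pos : 0 < ∑ m ∈ Finset.range N, ρ m * Complex.normSq (F m) :=
    Finset.sum_pos' (fun m _ => mul_nonneg (hρpos m).le (Complex.normSq_nonneg _))
      ⟨m₀, hm₀mem, mul_pos (hρpos m₀) hm₀⟩
  rw [← hmain] at hsum_pos
  by_contra h
  push_neg at h
  nlinarith

lemma riesz_posDef {s : ℝ} (hs0 : 0 < s) (hs1 : s < 1) {N : ℕ} (hN : 1 ≤ N) :
    (rieszMatrix s N).PosDef := by
  have hΓ : 0 < Real.Gamma s := Real.Gamma_pos_of_pos hs0
  rw [Matrix.posDef_iff_dotProduct_mulVec]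
  constructor
  · -- Hermitian
    rw [Matrix.IsHermitian, Matrix.conjTranspose]
    ext i j
    simp only [Matrix.map_apply, Matrix.transpose_apply, rieszMatrix, Matrix.of_apply, star_trivial]
    have : dNat N (j : ℕ) (i : ℕ) = dNat N (i : ℕ) (j : ℕ) := by unfold dNat; omega
    rw [this]
  · intro x hx
    -- the integrand family
    have hint : ∀ d : ℕ, IntegrableOn (fun t : ℝ => t ^ (s - 1) * Real.exp (-((1 + d) * t)))
        (Set.Ioi 0) := by
      intro d
      have hg := Real.GammaIntegral_convergent hs0
      refine Integrable.mono' hg ?_ ?_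
      · refine ContinuousOn.aestronglyMeasurable (fun t ht => ?_) measurableSet_Ioi
        have h1 : ContinuousAt (fun u : ℝ => u ^ (s - 1)) t :=
          Real.continuousAt_rpow_const t (s - 1) (Or.inl (ne_of_gt ht))
        have h2 : ContinuousAt (fun u : ℝ => Real.exp (-((1 + (d:ℝ)) * u))) t :=
          (Real.continuous_exp.comp ((continuous_const.mul continuous_id).neg)).continuousAt
        exact (h1.mul h2).continuousWithinAt
      · filter_upwards [ae_restrict_mem measurableSet_Ioi] with t ht
        have ht0 : (0:ℝ) < t := ht
        have habs : |t ^ (s - 1) * Real.exp (-((1 + (d:ℝ)) * t))|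
            = t ^ (s - 1) * Real.exp (-((1 + (d:ℝ)) * t)) := by
          apply _root_.abs_of_nonneg
          positivity
        rw [Real.norm_eq_abs, habs]
        have h1 : Real.exp (-((1 + d) * t)) ≤ Real.exp (-t) := by
          apply Real.exp_le_exp.mpr
          nlinarith [Nat.cast_nonneg (α := ℝ) d]
        calc t ^ (s - 1) * Real.exp (-((1 + d) * t)) ≤ t ^ (s - 1) * Real.exp (-t) :=
              mul_le_mul_of_nonneg_left h1 (Real.rpow_nonneg ht0.le _)
          _ = Real.exp (-t) * t ^ (s - 1) := mul_comm _ _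
    -- entrywise integral representation
    have hentry : ∀ d : ℕ, 1 / (1 + (d : ℝ)) ^ s
        = (Real.Gamma s)⁻¹ * ∫ t in Set.Ioi 0, t ^ (s - 1) * Real.exp (-((1 + d) * t)) := by
      intro d
      have hd : (0:ℝ) < 1 + d := by positivity
      rw [Real.integral_rpow_mul_exp_neg_mul_Ioi hs0 hd]
      rw [Real.div_rpow zero_le_one hd.le, Real.one_rpow]
      field_simp
    -- rewrite the quadratic form
    have hquad : dotProduct (star x) (rieszMatrix s N *ᵥ x)
        = (Real.Gamma s)⁻¹ * ∫ t in Set.Ioi 0,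
            ∑ i : Fin N, ∑ j : Fin N,
              x i * x j * (t ^ (s - 1) * Real.exp (-((1 + (dNat N i j : ℝ)) * t))) := by
      have swap : ∫ t in Set.Ioi 0, ∑ i : Fin N, ∑ j : Fin N,
            x i * x j * (t ^ (s - 1) * Real.exp (-((1 + (dNat N i j : ℝ)) * t)))
          = ∑ i : Fin N, ∑ j : Fin N,
            x i * x j * ∫ t in Set.Ioi 0, t ^ (s - 1) * Real.exp (-((1 + (dNat N i j : ℝ)) * t)) := by
        rw [integral_finset_sum _ (fun (i : Fin N) _ =>
          integrable_finset_sum _ fun (j : Fin N) _ =>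
            ((hint (dNat N (i:ℕ) (j:ℕ))).const_mul (x i * x j)))]
        refine Finset.sum_congr rfl fun i _ => ?_
        rw [integral_finset_sum _ (fun (j : Fin N) _ =>
          ((hint (dNat N (i:ℕ) (j:ℕ))).const_mul (x i * x j)))]
        exact Finset.sum_congr rfl fun j _ => integral_const_mul _ _
      rw [swap]
      simp only [star_trivial, dotProduct, Matrix.mulVec, rieszMatrix, Matrix.of_apply,
        Finset.mul_sum]
      refine Finset.sum_congr rfl fun i _ => Finset.sum_congr rfl fun j _ => ?_
      rw [hentry (dNat N (i:ℕ) (j:ℕ))]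
      ring
    rw [hquad]
    apply mul_pos (inv_pos.mpr hΓ)
    -- the integrand is the positive circulant quadratic form
    have hgpos : ∀ t : ℝ, t ∈ Set.Ioi (0:ℝ) → 0 < ∑ i : Fin N, ∑ j : Fin N,
        x i * x j * (t ^ (s - 1) * Real.exp (-((1 + (dNat N i j : ℝ)) * t))) := by
      intro t ht
      have ht0 : (0:ℝ) < t := ht
      have hr0 : 0 < Real.exp (-t) := Real.exp_pos _
      have hr1 : Real.exp (-t) < 1 := Real.exp_lt_one_iff.mpr (by linarith)
      have hrw : ∀ i j : Fin N, x i * x j * (t ^ (s - 1) * Real.exp (-((1 + (dNat N i j : ℝ)) * t)))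
          = t ^ (s - 1) * Real.exp (-t)
            * (x i * x j * (Real.exp (-t)) ^ (dNat N (i:ℕ) (j:ℕ))) := by
        intro i j
        have : Real.exp (-((1 + (dNat N i j : ℝ)) * t))
            = Real.exp (-t) * (Real.exp (-t)) ^ (dNat N (i:ℕ) (j:ℕ)) := by
          rw [← Real.exp_nat_mul, ← Real.exp_add]
          congr 1
          ring
        rw [this]
        ring
      have := quad_pos hN hr0 hr1 (x := x) hx
      calc (0:ℝ) < t ^ (s - 1) * Real.exp (-t) * ∑ i : Fin N, ∑ j : Fin N,
            x i * x j * (Real.exp (-t)) ^ (min ((i:ℤ) - (j:ℤ)).natAbs (N - ((i:ℤ) - (j:ℤ)).natAbs)) := by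
            apply mul_pos (by positivity) this
        _ = ∑ i : Fin N, ∑ j : Fin N,
            x i * x j * (t ^ (s - 1) * Real.exp (-((1 + (dNat N i j : ℝ)) * t))) := by
            rw [Finset.mul_sum]
            refine Finset.sum_congr rfl fun i _ => ?_
            rw [Finset.mul_sum]
            refine Finset.sum_congr rfl fun j _ => (hrw i j).symm
    have hgint : IntegrableOn (fun t : ℝ => ∑ i : Fin N, ∑ j : Fin N,
        x i * x j * (t ^ (s - 1) * Real.exp (-((1 + (dNat N i j : ℝ)) * t)))) (Set.Ioi 0) := by
      apply integrable_finset_sum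
      intro i _
      apply integrable_finset_sum
      intro j _
      exact (hint (dNat N i j)).const_mul _
    rw [MeasureTheory.setIntegral_pos_iff_support_of_nonneg_ae ?_ hgint]
    · refine lt_of_lt_of_le ?_ (measure_mono (fun t ht => ⟨ne_of_gt (hgpos t ht), ht⟩))
      rw [Real.volume_Ioi]
      exact ENNReal.zero_lt_top
    · filter_upwards [ae_restrict_mem measurableSet_Ioi] with t ht
      exact (hgpos t ht).le

/-- **Row-sum bound for the inverse Riesz matrix** (`s ∈ (0,1)`): `ℍ_s` is invertible and
`|∑_i (ℍ_s^{-1})_{i,1}| ≤ C / N^{1-s}`, with `C` independent of `N`. -/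
theorem riesz_matrix_inverse_row_sum (s : ℝ) (hs : s ∈ Set.Ioo (0 : ℝ) 1) :
    ∃ C > (0 : ℝ), ∀ N : ℕ, ∀ hN : 1 ≤ N,
      IsUnit (rieszMatrix s N).det ∧
        |∑ i : Fin N, (rieszMatrix s N)⁻¹ i ⟨0, hN⟩| ≤ C / (N : ℝ) ^ (1 - s) := by
  obtain ⟨hs0, hs1⟩ := hs
  refine ⟨(2:ℝ) ^ s, Real.rpow_pos_of_pos two_pos s, ?_⟩
  intro N hN
  have hpd := riesz_posDef hs0 hs1 hN
  have hdet : IsUnit (rieszMatrix s N).det := hpd.det_pos.ne'.isUnit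
  refine ⟨hdet, ?_⟩
  set A := rieszMatrix s N with hAdef
  haveI : NeZero N := ⟨by omega⟩
  set i0 : Fin N := ⟨0, hN⟩ with hi0
  haveI : Nonempty (Fin N) := ⟨i0⟩
  have hNR : (0:ℝ) < N := by exact_mod_cast Nat.lt_of_lt_of_le Nat.zero_lt_one hN
  -- entries are positive and bounded below
  have hbase : ∀ i j : Fin N, (0:ℝ) < 1 + (dNat N (i:ℕ) (j:ℕ) : ℝ) := by
    intro i j; positivity
  have hpos : ∀ i j : Fin N, 0 < A i j := by
    intro i j
    have : A i j = 1 / (1 + (dNat N (i:ℕ) (j:ℕ) : ℝ)) ^ s := rfl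
    rw [this]
    exact div_pos one_pos (Real.rpow_pos_of_pos (hbase i j) s)
  have hlb : ∀ i j : Fin N, 1 / (2 * (N:ℝ)) ^ s ≤ A i j := by
    intro i j
    have hdle : (dNat N (i:ℕ) (j:ℕ) : ℝ) ≤ 2 * N - 1 := by
      have hi : (i:ℕ) < N := i.isLt
      have hj : (j:ℕ) < N := j.isLt
      have : dNat N (i:ℕ) (j:ℕ) ≤ N := by unfold dNat; omega
      have hN1 : (1:ℝ) ≤ N := by exact_mod_cast hN
      have : (dNat N (i:ℕ) (j:ℕ) : ℝ) ≤ N := by exact_mod_cast this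
      linarith
    have h1 : (1 + (dNat N (i:ℕ) (j:ℕ) : ℝ)) ^ s ≤ (2 * (N:ℝ)) ^ s := by
      apply Real.rpow_le_rpow (hbase i j).le (by linarith) hs0.le
    have h2 : (0:ℝ) < (1 + (dNat N (i:ℕ) (j:ℕ) : ℝ)) ^ s :=
      Real.rpow_pos_of_pos (hbase i j) s
    have : A i j = 1 / (1 + (dNat N (i:ℕ) (j:ℕ) : ℝ)) ^ s := rfl
    rw [this]
    exact one_div_le_one_div_of_le h2 h1
  -- constant row sums
  set R : ℝ := ∑ j : Fin N, A i0 j with hR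
  have hconst : ∀ i : Fin N, ∑ j : Fin N, A i j = R := by
    intro i
    rw [hR]
    refine Finset.sum_nbij' (fun j => j - i) (fun j => j + i) (fun _ _ => Finset.mem_univ _)
      (fun _ _ => Finset.mem_univ _) (fun j _ => sub_add_cancel j i)
      (fun j _ => add_sub_cancel_right j i) ?_
    intro j _
    have hval : ((j - i : Fin N) : ℕ) = (N - (i:ℕ) + (j:ℕ)) % N := by
      rw [Fin.sub_def]
    have hi : (i:ℕ) < N := i.isLt
    have hj : (j:ℕ) < N := j.isLt
    have hdeq : dNat N (i:ℕ) (j:ℕ) = dNat N (i0:ℕ) ((j - i : Fin N) : ℕ) := by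
      rw [hval]
      have h0 : (i0:ℕ) = 0 := rfl
      rw [h0]
      unfold dNat
      rcases le_or_gt N (N - (i:ℕ) + (j:ℕ)) with h | h
      · have h2 : (N - (i:ℕ) + (j:ℕ)) % N = N - (i:ℕ) + (j:ℕ) - N := by
          rw [Nat.mod_eq_sub_mod h, Nat.mod_eq_of_lt (by omega)]
        rw [h2]
        omega
      · have h2 : (N - (i:ℕ) + (j:ℕ)) % N = N - (i:ℕ) + (j:ℕ) := Nat.mod_eq_of_lt h
        rw [h2]
        omega
    show (1:ℝ) / (1 + (dNat N (i:ℕ) (j:ℕ) : ℝ)) ^ s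
        = 1 / (1 + (dNat N (i0:ℕ) ((j - i : Fin N) : ℕ) : ℝ)) ^ s
    rw [hdeq]
  have hRpos : 0 < R := by
    rw [hR]
    exact Finset.sum_pos (fun j _ => hpos i0 j) Finset.univ_nonempty
  -- the inverse has constant row sums R⁻¹
  have hmul : A *ᵥ (fun _ => (1:ℝ)) = fun _ => R := by
    funext i
    simp only [Matrix.mulVec, dotProduct, mul_one]
    exact hconst i
  have hinv_row : ∀ i : Fin N, ∑ j : Fin N, A⁻¹ i j = R⁻¹ := by
    intro i
    have h1 : A⁻¹ *ᵥ (A *ᵥ (fun _ => (1:ℝ))) = fun _ => (1:ℝ) := by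
      rw [Matrix.mulVec_mulVec, Matrix.nonsing_inv_mul A hdet, Matrix.one_mulVec]
    rw [hmul] at h1
    have h2 := congrFun h1 i
    simp only [Matrix.mulVec, dotProduct] at h2
    have h3 : (∑ j : Fin N, A⁻¹ i j) * R = 1 := by
      rw [Finset.sum_mul]
      exact h2
    field_simp at h3 ⊢
    linarith [h3]
  -- symmetry of A and hence of A⁻¹
  have htrans : Aᵀ = A := by
    ext i j
    show A j i = A i j
    have : dNat N (j:ℕ) (i:ℕ) = dNat N (i:ℕ) (j:ℕ) := by unfold dNat; omega
    show (1:ℝ) / (1 + (dNat N (j:ℕ) (i:ℕ) : ℝ)) ^ s = 1 / (1 + (dNat N (i:ℕ) (j:ℕ) : ℝ)) ^ s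
    rw [this]
  have hinvtrans : (A⁻¹)ᵀ = A⁻¹ := by
    rw [Matrix.transpose_nonsing_inv, htrans]
  have hcol : ∑ i : Fin N, A⁻¹ i i0 = R⁻¹ := by
    have : ∀ i : Fin N, A⁻¹ i i0 = A⁻¹ i0 i := by
      intro i
      conv_lhs => rw [← hinvtrans]
      exact Matrix.transpose_apply _ _ _
    rw [Finset.sum_congr rfl fun i _ => this i]
    exact hinv_row i0
  rw [hcol]
  -- the final estimate
  have hRlb : (N:ℝ) * (1 / (2 * (N:ℝ)) ^ s) ≤ R := by
    rw [hR]
    calc (N:ℝ) * (1 / (2 * (N:ℝ)) ^ s)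
        = ∑ _j : Fin N, 1 / (2 * (N:ℝ)) ^ s := by
          rw [Finset.sum_const, Finset.card_univ, Fintype.card_fin, nsmul_eq_mul]
      _ ≤ ∑ j : Fin N, A i0 j := Finset.sum_le_sum fun j _ => hlb i0 j
  have h2N : (0:ℝ) < (2 * (N:ℝ)) ^ s := Real.rpow_pos_of_pos (by linarith) s
  have hclb : (0:ℝ) < (N:ℝ) * (1 / (2 * (N:ℝ)) ^ s) := by positivity
  have hinvle : R⁻¹ ≤ ((N:ℝ) * (1 / (2 * (N:ℝ)) ^ s))⁻¹ := by
    apply inv_anti₀ hclb hRlb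
  have hEq : ((N:ℝ) * (1 / (2 * (N:ℝ)) ^ s))⁻¹ = 2 ^ s / (N:ℝ) ^ (1 - s) := by
    rw [Real.mul_rpow (by norm_num : (0:ℝ) ≤ 2) hNR.le]
    rw [Real.rpow_sub hNR, Real.rpow_one]
    have hNs : (0:ℝ) < (N:ℝ) ^ s := Real.rpow_pos_of_pos hNR s
    have h2s : (0:ℝ) < (2:ℝ) ^ s := Real.rpow_pos_of_pos two_pos s
    field_simp
  rw [abs_of_pos (inv_pos.mpr hRpos)]
  rw [← hEq]
  exact hinvle


end
end

section
/- Let n≥1, let A⊂ℝ^n be a Borel set, β>0, and let H, E_0, E_1: A→ℝ be measurable functions such that for every t∈[0,1] the function e^{−β(H+(1−t)E_0+tE_1)} is integrable on A with positive total mass; let μ(t) be the probability measure on A with density proportional to e^{−β(H(x)+(1−t)E_0(x)+tE_1(x))}. Let G:A→ℝ be bounded and measurable, and assume sup_{t∈[0,1]} E_{μ(t)}[(E_1−E_0)²] < ∞. Then t ↦ E_{μ(t)}[G] is differentiable on (0,1) with derivative −β·Cov_{μ(t)}[G, E_1−E_0], and consequently E_{μ(1)}[G] − E_{μ(0)}[G]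 = −β·∫_0^1 Cov_{μ(t)}[G, E_1−E_0] dt. -/
open MeasureTheory Real Filter Topology

noncomputable section

/-- Covariance of two real observables under a measure. -/
def Cov {α : Type*} [MeasurableSpace α] (μ : Measure α) (f g : α → ℝ) : ℝ :=
  (∫ x, f x * g x ∂μ) - (∫ x, f x ∂μ) * ∫ x, g x ∂μ

/-- The interpolating Gibbs measures `dμ(t) ∝ e^{-β(H + (1-t)E₀ + tE₁)} 1_A dx`. -/
def interpGibbs {n : ℕ} (A : Set (Fin n → ℝ)) (β : ℝ) (H E₀ E₁ : (Fin n → ℝ) → ℝ)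
    (t : ℝ) : Measure (Fin n → ℝ) :=
  (ENNReal.ofReal (∫ x in A, Real.exp (-β * (H x + (1 - t) * E₀ x + t * E₁ x))))⁻¹ •
    ((volume.restrict A).withDensity fun x =>
      ENNReal.ofReal (Real.exp (-β * (H x + (1 - t) * E₀ x + t * E₁ x))))


/-!
Write the exponent as `a + t X` with `a = -β (H + E₀)` and `X = -β (E₁ - E₀)`. Then `μ(t)` is the
exponential tilt by `t X` of the probability measure `μ(0)`, so `E_{μ(t)}[G] = N(t) / mgf X t` with
`N(t) = ∫ G e^{tX} dμ(0)`. Inside the interval where `e^{tX}` is integrable, `|X| e^{sX}` is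
dominated near `t` by an integrable function, so numerator and denominator are differentiated
under the integral sign and the quotient rule yields `Cov_{μ(t)}[G, X]`. The bound on second
moments bounds this covariance, hence makes it integrable on `(0, 1)`, while domination by
`e^{0·X} + e^{1·X}` keeps `N` and the mgf continuous up to the endpoints; the fundamental theorem
of calculus concludes.
-/

open ProbabilityTheory Set

lemma cov_const_mul_right {α : Type*} [MeasurableSpace α] (μ : Measure α) (f g : α → ℝ)
    (c : ℝ) : Cov μ f (fun x ↦ c * g x) = c * Cov μ f g := by
  simp only [Cov, mul_left_comm (f _) c, integral_const_mul]
  ring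

lemma exp_mul_le_exp_mul_add_exp_mul {u t v : ℝ} (x : ℝ) (hut : u ≤ t) (htv : t ≤ v) :
    exp (t * x) ≤ exp (u * x) + exp (v * x) := by
  rcases le_total 0 x with hx | hx
  · linarith [exp_le_exp.2 (mul_le_mul_of_nonneg_right htv hx), exp_pos (u * x)]
  · linarith [exp_le_exp.2 (mul_le_mul_of_nonpos_right hut hx), exp_pos (v * x)]

lemma intervalIntegrable_of_hasDerivAt_of_abs_le {f f' : ℝ → ℝ} {a b C : ℝ} (hab : a ≤ b)
    (hderiv : ∀ x ∈ Ioo a b, HasDerivAt f (f' x) x) (hbound : ∀ x ∈ Ioo a b, |f' x| ≤ C) :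
    IntervalIntegrable f' volume a b := by
  rw [intervalIntegrable_iff_integrableOn_Ioo_of_le hab]
  refine Integrable.mono' (integrableOn_const measure_Ioo_lt_top.ne)
    ((measurable_deriv f).aestronglyMeasurable.congr ?_)
    (ae_restrict_of_forall_mem measurableSet_Ioo hbound)
  exact ae_restrict_of_forall_mem measurableSet_Ioo fun x hx ↦ (hderiv x hx).deriv

section TiltedFamily

variable {Ω : Type*} [MeasurableSpace Ω] {μ : Measure Ω} {X G : Ω → ℝ} {M t u v : ℝ}

lemma hasDerivAt_integral_mul_exp_mul (hG : AEStronglyMeasurable G μ) (hGM : ∀ ω, |G ω| ≤ M)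
    (ht : t ∈ interior (integrableExpSet X μ)) :
    HasDerivAt (fun s ↦ ∫ ω, G ω * exp (s * X ω) ∂μ)
      (∫ ω, G ω * (X ω * exp (t * X ω)) ∂μ) t := by
  have hX : AEMeasurable X μ := aemeasurable_of_mem_interior_integrableExpSet ht
  obtain ⟨l, r, hlr, h_subset⟩ :=
    mem_nhds_iff_exists_Ioo_subset.1 (mem_interior_iff_mem_nhds.1 ht)
  set δ := ((t - l) ⊓ (r - t)) / 2
  have hδ : 0 < δ := half_pos (by simp [hlr.1, hlr.2])
  have h_bound : Integrable (fun ω ↦ |X ω| ^ 1 * exp (t * X ω + δ / 2 * |X ω|)) μ :=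
    integrable_pow_abs_mul_exp_add_of_integrable_exp_mul
      (h_subset (add_half_inf_sub_mem_Ioo hlr)) (h_subset (sub_half_inf_sub_mem_Ioo hlr))
      (by positivity) (by rw [abs_of_pos hδ]; linarith) 1
  refine (hasDerivAt_integral_of_dominated_loc_of_deriv_le
    (F := fun s ω ↦ G ω * exp (s * X ω)) (F' := fun s ω ↦ G ω * (X ω * exp (s * X ω)))
    (bound := fun ω ↦ M * (|X ω| ^ 1 * exp (t * X ω + δ / 2 * |X ω|)))
    (Metric.ball_mem_nhds t (half_pos hδ)) (.of_forall fun s ↦ hG.mul (by fun_prop))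
    ((interior_subset ht).bdd_mul hG (c := M) (.of_forall hGM))
    (hG.mul (hX.mul (hX.const_mul t).exp).aestronglyMeasurable)
    (.of_forall fun ω s hs ↦ ?_) (h_bound.const_mul M)
    (.of_forall fun ω s _ ↦ ?_)).2
  · have hexp : exp (s * X ω) ≤ exp (t * X ω + δ / 2 * |X ω|) := by
      rw [Metric.mem_ball, Real.dist_eq] at hs
      have : (s - t) * X ω ≤ δ / 2 * |X ω| :=
        (le_abs_self _).trans (by rw [abs_mul]; gcongr)
      exact exp_le_exp.2 (by linarith)
    rw [norm_mul, norm_mul, norm_eq_abs, norm_eq_abs, norm_of_nonneg (exp_pos _).le, pow_one]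
    gcongr
    · exact (abs_nonneg _).trans (hGM ω)
    · exact hGM ω
  · simpa [mul_comm, mul_assoc] using ((hasDerivAt_mul_const (X ω)).exp).const_mul (G ω)

lemma continuousOn_integral_mul_exp_mul (hG : AEStronglyMeasurable G μ) (hGM : ∀ ω, |G ω| ≤ M)
    (hu : u ∈ integrableExpSet X μ) (hv : v ∈ integrableExpSet X μ) :
    ContinuousOn (fun s ↦ ∫ ω, G ω * exp (s * X ω) ∂μ) (Icc u v) := by
  refine continuousOn_of_dominated (bound := fun ω ↦ M * (exp (u * X ω) + exp (v * X ω)))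
    (fun s hs ↦ hG.mul (integrable_exp_mul_of_le_of_le hu hv hs.1 hs.2).aestronglyMeasurable)
    (fun s hs ↦ .of_forall fun ω ↦ ?_) ((hu.add hv).const_mul M)
    (.of_forall fun ω ↦ by fun_prop)
  rw [norm_mul, norm_eq_abs, norm_of_nonneg (exp_pos _).le]
  exact mul_le_mul (hGM ω) (exp_mul_le_exp_mul_add_exp_mul _ hs.1 hs.2) (exp_pos _).le
    ((abs_nonneg _).trans (hGM ω))

lemma integral_tilted_mul_eq_integral_mul_exp_div_mgf (g : Ω → ℝ) (s : ℝ) :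
    ∫ ω, g ω ∂(μ.tilted (s * X ·)) = (∫ ω, g ω * exp (s * X ω) ∂μ) / mgf X μ s := by
  rw [integral_tilted_mul_eq_mgf, ← integral_div]
  congr with ω
  rw [smul_eq_mul]
  ring

theorem hasDerivAt_integral_tilted_mul [NeZero μ] (hG : AEStronglyMeasurable G μ)
    (hGM : ∀ ω, |G ω| ≤ M) (ht : t ∈ interior (integrableExpSet X μ)) :
    HasDerivAt (fun s ↦ ∫ ω, G ω ∂(μ.tilted (s * X ·))) (Cov (μ.tilted (t * X ·)) G X) t := by
  have hmgf : 0 < mgf X μ t :=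
    mgf_pos' (NeZero.ne μ) (integrable_of_mem_integrableExpSet (interior_subset ht))
  simp_rw [integral_tilted_mul_eq_integral_mul_exp_div_mgf]
  refine ((hasDerivAt_integral_mul_exp_mul hG hGM ht).div (hasDerivAt_mgf ht)
    hmgf.ne').congr_deriv ?_
  simp only [Cov, integral_tilted_mul_eq_integral_mul_exp_div_mgf, mul_assoc]
  generalize ∫ ω, G ω * (X ω * exp (t * X ω)) ∂μ = a
  generalize ∫ ω, G ω * exp (t * X ω) ∂μ = b
  generalize ∫ ω, X ω * exp (t * X ω) ∂μ = c
  field_simp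

lemma abs_cov_le_of_abs_le [IsProbabilityMeasure μ] (hGM : ∀ ω, |G ω| ≤ M) (hX : MemLp X 2 μ)
    {M₂ : ℝ} (hX2 : ∫ ω, X ω ^ 2 ∂μ ≤ M₂) :
    |Cov μ G X| ≤ 2 * M * (1 + M₂) := by
  have hX1 : Integrable X μ := hX.integrable one_le_two
  have hX_sq : Integrable (fun ω ↦ X ω ^ 2) μ := hX.integrable_sq
  have h_abs_le : ∫ ω, |X ω| ∂μ ≤ 1 + ∫ ω, X ω ^ 2 ∂μ := by
    calc ∫ ω, |X ω| ∂μ ≤ ∫ ω, 1 + X ω ^ 2 ∂μ :=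
          integral_mono hX1.abs ((integrable_const 1).add hX_sq) fun ω ↦ by
            nlinarith [sq_abs (X ω), sq_nonneg (|X ω| - 1)]
      _ = 1 + ∫ ω, X ω ^ 2 ∂μ := by simp [integral_add (integrable_const _) hX_sq]
  have hGX : |∫ ω, G ω * X ω ∂μ| ≤ M * ∫ ω, |X ω| ∂μ := by
    rw [← integral_const_mul]
    refine abs_integral_le_integral_abs.trans (integral_mono_of_nonneg
      (.of_forall fun _ ↦ abs_nonneg _) (hX1.abs.const_mul M) (.of_forall fun ω ↦ ?_))
    simp only [abs_mul]
    exact mul_le_mul_of_nonneg_right (hGM ω) (abs_nonneg _)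
  have hG1 : |∫ ω, G ω ∂μ| ≤ M := by
    simpa using norm_integral_le_of_norm_le_const (μ := μ) (f := G) (.of_forall hGM)
  have hM : 0 ≤ M := (abs_nonneg _).trans hG1
  calc |Cov μ G X| ≤ |∫ ω, G ω * X ω ∂μ| + |∫ ω, G ω ∂μ| * |∫ ω, X ω ∂μ| := by
        rw [Cov, ← abs_mul]; exact abs_sub _ _
    _ ≤ M * ∫ ω, |X ω| ∂μ + M * ∫ ω, |X ω| ∂μ := by
        gcongr
        exact abs_integral_le_integral_abs
    _ ≤ 2 * M * (1 + M₂) := by nlinarith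

lemma Ioo_subset_interior_integrableExpSet (hu : u ∈ integrableExpSet X μ)
    (hv : v ∈ integrableExpSet X μ) : Ioo u v ⊆ interior (integrableExpSet X μ) :=
  interior_Icc (a := u) ▸
    interior_mono ((convex_iff_ordConnected.1 convex_integrableExpSet).out hu hv)

theorem integral_tilted_mul_sub_eq_integral_cov [NeZero μ] (hG : AEStronglyMeasurable G μ)
    (hGM : ∀ ω, |G ω| ≤ M) (huv : u ≤ v) (hu : u ∈ integrableExpSet X μ)
    (hv : v ∈ integrableExpSet X μ) {M₂ : ℝ}
    (hX2 : ∀ t ∈ Ioo u v, ∫ ω, X ω ^ 2 ∂(μ.tilted (t * X ·)) ≤ M₂) :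
    ∫ ω, G ω ∂(μ.tilted (v * X ·)) - ∫ ω, G ω ∂(μ.tilted (u * X ·)) =
      ∫ t in u..v, Cov (μ.tilted (t * X ·)) G X := by
  have h_int := Ioo_subset_interior_integrableExpSet hu hv
  have hderiv : ∀ t ∈ Ioo u v, HasDerivAt (fun s ↦ ∫ ω, G ω ∂(μ.tilted (s * X ·)))
      (Cov (μ.tilted (t * X ·)) G X) t :=
    fun t ht ↦ hasDerivAt_integral_tilted_mul hG hGM (h_int ht)
  have hcont : ContinuousOn (fun s ↦ ∫ ω, G ω ∂(μ.tilted (s * X ·))) (Icc u v) := by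
    simp_rw [integral_tilted_mul_eq_integral_mul_exp_div_mgf]
    have hmgf : ContinuousOn (mgf X μ) (Icc u v) := by
      unfold mgf
      simpa only [one_mul] using continuousOn_integral_mul_exp_mul (G := fun _ ↦ 1) (M := 1)
        aestronglyMeasurable_const (fun _ ↦ abs_one.le) hu hv
    exact (continuousOn_integral_mul_exp_mul hG hGM hu hv).div hmgf fun s hs ↦
      (mgf_pos' (NeZero.ne μ) (integrable_exp_mul_of_le_of_le hu hv hs.1 hs.2)).ne'
  have hbound : ∀ t ∈ Ioo u v, |Cov (μ.tilted (t * X ·)) G X| ≤ 2 * M * (1 + M₂) := by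
    intro t ht
    have := isProbabilityMeasure_tilted
      (integrable_of_mem_integrableExpSet (interior_subset (h_int ht)))
    exact abs_cov_le_of_abs_le hGM (memLp_tilted_mul (h_int ht) 2) (hX2 t ht)
  exact (intervalIntegral.integral_eq_sub_of_hasDerivAt_of_le huv hcont hderiv
    (intervalIntegrable_of_hasDerivAt_of_abs_le huv hderiv hbound)).symm

end TiltedFamily

-- When `∫ exp f ∂ν = 0` the two measures differ (`⊤ • _` against `0`), yet both integrals vanish.
lemma integral_smul_withDensity_exp_eq_integral_tilted {α : Type*} [MeasurableSpace α]
    (ν : Measure α) (f g : α → ℝ) :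
    ∫ x, g x ∂((ENNReal.ofReal (∫ x, exp (f x) ∂ν))⁻¹ •
      ν.withDensity fun x ↦ ENNReal.ofReal (exp (f x))) = ∫ x, g x ∂ν.tilted f := by
  have hZ : 0 ≤ ∫ x, exp (f x) ∂ν := integral_nonneg fun _ ↦ (exp_pos _).le
  have h_tilted : ν.tilted f = ENNReal.ofReal (∫ x, exp (f x) ∂ν)⁻¹ •
      ν.withDensity fun x ↦ ENNReal.ofReal (exp (f x)) := by
    rw [Measure.tilted, ← withDensity_smul' _ _ ENNReal.ofReal_ne_top]
    congr with x
    rw [Pi.smul_apply, smul_eq_mul, ← ENNReal.ofReal_mul (inv_nonneg.2 hZ), div_eq_inv_mul]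
  rw [h_tilted, integral_smul_measure, integral_smul_measure, ENNReal.toReal_inv,
    ENNReal.toReal_ofReal hZ, ENNReal.toReal_ofReal (inv_nonneg.2 hZ)]

lemma mem_integrableExpSet_tilted_iff {α : Type*} [MeasurableSpace α] {ν : Measure α}
    {a X : α → ℝ} (ha : Integrable (fun x ↦ exp (a x)) ν) (t : ℝ) :
    t ∈ integrableExpSet X (ν.tilted a) ↔ Integrable (fun x ↦ exp (a x + t * X x)) ν := by
  simp only [integrableExpSet, mem_ofPred_eq, integrable_tilted_iff ha, smul_eq_mul, ← exp_add]

lemma integral_interpGibbs {n : ℕ} {A : Set (Fin n → ℝ)} {β : ℝ} {H E₀ E₁ : (Fin n → ℝ) → ℝ}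
    (h0 : IntegrableOn (fun x ↦ exp (-β * (H x + E₀ x))) A) (t : ℝ) (g : (Fin n → ℝ) → ℝ) :
    ∫ x, g x ∂interpGibbs A β H E₀ E₁ t = ∫ x, g x ∂((volume.restrict A).tilted
      (fun x ↦ -β * (H x + E₀ x))).tilted (fun x ↦ t * (-β * (E₁ x - E₀ x))) := by
  rw [interpGibbs, integral_smul_withDensity_exp_eq_integral_tilted, tilted_tilted h0]
  congr with x
  simp only [Pi.add_apply]
  ring

theorem interpolating_gibbs_derivative_general (n : ℕ) (A : Set (Fin n → ℝ))
    (β : ℝ)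
    (H E₀ E₁ G : (Fin n → ℝ) → ℝ)
    (hG : Measurable G)
    (hint : ∀ t ∈ Set.Icc (0 : ℝ) 1,
      IntegrableOn (fun x => Real.exp (-β * (H x + (1 - t) * E₀ x + t * E₁ x))) A volume ∧
        0 < ∫ x in A, Real.exp (-β * (H x + (1 - t) * E₀ x + t * E₁ x)))
    (hGbd : ∃ M, ∀ x, |G x| ≤ M)
    (hE2 : ∃ M₂ : ℝ, ∀ t ∈ Set.Icc (0 : ℝ) 1,
      (∫ x, (E₁ x - E₀ x) ^ 2 ∂interpGibbs A β H E₀ E₁ t) ≤ M₂) :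
    (∀ t ∈ Set.Ioo (0 : ℝ) 1,
      HasDerivAt (fun u => ∫ x, G x ∂interpGibbs A β H E₀ E₁ u)
        (-β * Cov (interpGibbs A β H E₀ E₁ t) G (fun x => E₁ x - E₀ x)) t) ∧
    (∫ x, G x ∂interpGibbs A β H E₀ E₁ 1) - (∫ x, G x ∂interpGibbs A β H E₀ E₁ 0) =
      -β * ∫ t in (0 : ℝ)..1, Cov (interpGibbs A β H E₀ E₁ t) G (fun x => E₁ x - E₀ x) := by
  obtain ⟨M, hM⟩ := hGbd
  obtain ⟨M₂, hM₂⟩ := hE2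
  have h0 : IntegrableOn (fun x ↦ exp (-β * (H x + E₀ x))) A := by
    simpa using (hint 0 ⟨le_rfl, zero_le_one⟩).1
  have : NeZero (volume.restrict A) :=
    ⟨fun h ↦ by simpa [h] using (hint 0 ⟨le_rfl, zero_le_one⟩).2⟩
  set X : (Fin n → ℝ) → ℝ := fun x ↦ -β * (E₁ x - E₀ x)
  set μ := (volume.restrict A).tilted fun x ↦ -β * (H x + E₀ x)
  have hμ : ∀ t (g : (Fin n → ℝ) → ℝ),
      ∫ x, g x ∂interpGibbs A β H E₀ E₁ t = ∫ x, g x ∂μ.tilted (t * X ·) :=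
    integral_interpGibbs h0
  have : IsProbabilityMeasure μ := isProbabilityMeasure_tilted h0
  have hexpSet : ∀ t ∈ Icc (0 : ℝ) 1, t ∈ integrableExpSet X μ := fun t ht ↦ by
    refine (mem_integrableExpSet_tilted_iff h0 t).2 ?_
    have hexp : ∀ x, -β * (H x + (1 - t) * E₀ x + t * E₁ x) = -β * (H x + E₀ x) + t * X x :=
      fun x ↦ by ring
    simpa only [IntegrableOn, hexp] using (hint t ht).1
  have hcov : ∀ t, Cov (μ.tilted (t * X ·)) G X =
      -β * Cov (interpGibbs A β H E₀ E₁ t) G (fun x ↦ E₁ x - E₀ x) := fun t ↦ by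
    change Cov _ G (fun x ↦ -β * (E₁ x - E₀ x)) = _
    rw [cov_const_mul_right]
    simp only [Cov, hμ]
  have hX2 : ∀ t ∈ Ioo (0 : ℝ) 1, ∫ x, X x ^ 2 ∂(μ.tilted (t * X ·)) ≤ β ^ 2 * M₂ := by
    intro t ht
    have hX_sq : ∀ x, X x ^ 2 = β ^ 2 * (E₁ x - E₀ x) ^ 2 := fun x ↦ by ring
    simp only [hX_sq, integral_const_mul, ← hμ]
    exact mul_le_mul_of_nonneg_left (hM₂ t (Ioo_subset_Icc_self ht)) (sq_nonneg β)
  have h_zero := hexpSet 0 (by simp)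
  have h_one := hexpSet 1 (by simp)
  refine ⟨fun t ht ↦ ?_, ?_⟩
  · simpa only [hμ, hcov] using hasDerivAt_integral_tilted_mul hG.aestronglyMeasurable hM
      (Ioo_subset_interior_integrableExpSet h_zero h_one ht)
  · simpa only [hμ, hcov, one_mul, zero_mul, intervalIntegral.integral_const_mul] using
      integral_tilted_mul_sub_eq_integral_cov hG.aestronglyMeasurable hM zero_le_one
        h_zero h_one hX2

/-- **Differentiation of interpolating Gibbs expectations.**  If the interpolating densities
are integrable with positive mass, `G` is bounded measurable and
`sup_{t∈[0,1]} E_{μ(t)}[(E₁-E₀)²] < ∞`, then `t ↦ E_{μ(t)}[G]` is differentiable on `(0,1)`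
with derivative `-β Cov_{μ(t)}[G, E₁-E₀]`, and
`E_{μ(1)}[G] - E_{μ(0)}[G] = -β ∫₀¹ Cov_{μ(t)}[G, E₁-E₀] dt`. -/
theorem interpolating_gibbs_derivative (n : ℕ) (A : Set (Fin n → ℝ))
    (hA : MeasurableSet A) (β : ℝ) (hβ : 0 < β)
    (H E₀ E₁ G : (Fin n → ℝ) → ℝ)
    (hH : Measurable H) (hE₀ : Measurable E₀) (hE₁ : Measurable E₁) (hG : Measurable G)
    (hint : ∀ t ∈ Set.Icc (0 : ℝ) 1,
      IntegrableOn (fun x => Real.exp (-β * (H x + (1 - t) * E₀ x + t * E₁ x))) A volume ∧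
        0 < ∫ x in A, Real.exp (-β * (H x + (1 - t) * E₀ x + t * E₁ x)))
    (hGbd : ∃ M, ∀ x, |G x| ≤ M)
    (hE2 : ∃ M₂ : ℝ, ∀ t ∈ Set.Icc (0 : ℝ) 1,
      (∫ x, (E₁ x - E₀ x) ^ 2 ∂interpGibbs A β H E₀ E₁ t) ≤ M₂) :
    (∀ t ∈ Set.Ioo (0 : ℝ) 1,
      HasDerivAt (fun u => ∫ x, G x ∂interpGibbs A β H E₀ E₁ u)
        (-β * Cov (interpGibbs A β H E₀ E₁ t) G (fun x => E₁ x - E₀ x)) t) ∧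
    (∫ x, G x ∂interpGibbs A β H E₀ E₁ 1) - (∫ x, G x ∂interpGibbs A β H E₀ E₁ 0) =
      -β * ∫ t in (0 : ℝ)..1, Cov (interpGibbs A β H E₀ E₁ t) G (fun x => E₁ x - E₀ x) :=
  interpolating_gibbs_derivative_general n A β H E₀ E₁ G hG hint hGbd hE2
end
end
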